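/- With M, M*, T_e as above, the Swendsen-Wang transition matrix on the random-cluster model factorizes as P_SW = M (∏_{e∈E} T_e) M*, where P_SW(A,B) = q^{-c(A)} (p/(1−p))^{|B|} Σ_{σ∈Ω_P} (1−p)^{|E(σ)|} 𝟙(σ ∈ Ω(A∪B)). -/

import Mathlib

open scoped BigOperators
open scoped Classical

noncomputable section

/-- Number of connected components of the spanning subgraph `(V, A)`. -/
def numComp {V : Type*} (A : Finset (Sym2 V)) : ℕ :=
  Nat.card (SimpleGraph.fromEdgeSet (↑A : Set (Sym2 V))).ConnectedComponent

variable {V : Type*} [Fintype V] [DecidableEq V]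

/-- The random-cluster state space: subsets of the edge set `E`. -/
def RC (E : Finset (Sym2 V)) : Type _ := {A : Finset (Sym2 V) // A ⊆ E}

instance (E : Finset (Sym2 V)) : Fintype (RC E) := Subtype.fintype _
instance (E : Finset (Sym2 V)) : DecidableEq (RC E) := Subtype.instDecidableEq

/-- The joint state space `Ω_J = Ω_P × Ω_RC`. -/
def J (E : Finset (Sym2 V)) (q : ℕ) : Type _ := (V → Fin q) × RC E

instance (E : Finset (Sym2 V)) (q : ℕ) : Fintype (J E q) := instFintypeProd _ _
instance (E : Finset (Sym2 V)) (q : ℕ) : DecidableEq (J E q) := instDecidableEqProd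

/-- `M(B,(σ,A)) = q^{-c(B)} 𝟙(A=B) 𝟙(σ ∈ Ω(B))`. -/
def Mmat (E : Finset (Sym2 V)) (q : ℕ) : Matrix (RC E) (J E q) ℝ :=
  Matrix.of fun B x =>
    if x.2 = B ∧ ∀ u v : V, s(u, v) ∈ B.val → x.1 u = x.1 v
      then ((q : ℝ) ^ numComp B.val)⁻¹ else 0

/-- `M*((σ,A),B) = 𝟙(A=B)`. -/
def MmatStar (E : Finset (Sym2 V)) (q : ℕ) : Matrix (J E q) (RC E) ℝ :=
  Matrix.of fun x B => if x.2 = B then 1 else 0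

/-- The single-edge update matrix `T_e` on the joint space. -/
def Tmat (E : Finset (Sym2 V)) (q : ℕ) (p : ℝ) (e : Sym2 V) :
    Matrix (J E q) (J E q) ℝ :=
  Matrix.of fun x y =>
    if x.1 = y.1 then
      (if ∀ u v : V, e = s(u, v) → x.1 u = x.1 v then
        (if y.2.val = insert e x.2.val then p
          else if y.2.val = x.2.val.erase e then 1 - p else 0)
      else
        (if y.2.val = x.2.val.erase e then 1 else 0))
    else 0

/-! Each `T_e` keeps the spins `σ` and resamples only the edge `e`: it is put in with probability
`p` if `e` is monochromatic under `σ` and removed otherwise, whatever its previous status.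
Hence after all the `T_e` the new edge set `B` no longer depends on the old one `A`, and the
transition weight is the product of the single-edge weights, namely
`p ^ |B| (1 - p) ^ (|E(σ)| - |B|)` if `B ⊆ E(σ)` and `0` otherwise. `M` then averages over the
`σ` compatible with `A`, `M*` forgets `σ`, and `σ ∈ Ω(A)` together with `B ⊆ E(σ)` is exactly
`σ ∈ Ω(A ∪ B)`. -/

open Finset

namespace Finset

lemma eq_insert_iff_mem_and_erase_eq {α : Type*} [DecidableEq α] {S T : Finset α} {e : α} :
    S = insert e T ↔ e ∈ S ∧ S.erase e = T.erase e := by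
  constructor
  · rintro rfl
    exact ⟨mem_insert_self e T, erase_insert_eq_erase T e⟩
  · rintro ⟨he, h⟩
    rw [← insert_erase he, h, ← erase_insert_eq_erase, insert_erase (mem_insert_self e T)]

lemma eq_erase_iff_notMem_and_erase_eq {α : Type*} [DecidableEq α] {S T : Finset α} {e : α} :
    S = T.erase e ↔ e ∉ S ∧ S.erase e = T.erase e := by
  constructor
  · rintro rfl
    exact ⟨notMem_erase e T, erase_idem⟩
  · rintro ⟨he, h⟩
    rw [← h, erase_eq_of_notMem he]

end Finset

def IsMonochromatic {q : ℕ} (σ : V → Fin q) (e : Sym2 V) : Prop :=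
  ∀ u v : V, e = s(u, v) → σ u = σ v

omit [Fintype V] [DecidableEq V] in
lemma forall_sym2_mem_iff_forall_isMonochromatic {q : ℕ} (σ : V → Fin q) (A : Finset (Sym2 V)) :
    (∀ u v : V, s(u, v) ∈ A → σ u = σ v) ↔ ∀ e ∈ A, IsMonochromatic σ e :=
  ⟨fun h _ he u v huv => h u v (huv ▸ he), fun h u v huv => h _ huv u v rfl⟩

/-- The weight with which `T_e`, at spins `σ`, gives `e` the status it has in `B`. -/
def edgeWeight (p : ℝ) {q : ℕ} (σ : V → Fin q) (B : Finset (Sym2 V)) (e : Sym2 V) : ℝ :=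
  if e ∈ B then (if IsMonochromatic σ e then p else 0)
  else (if IsMonochromatic σ e then 1 - p else 1)

namespace RC

variable {E : Finset (Sym2 V)} {e : Sym2 V}

omit [Fintype V] [DecidableEq V] in
@[ext] lemma ext {A B : RC E} (h : A.val = B.val) : A = B := Subtype.ext h

def insertEdge (he : e ∈ E) (A : RC E) : RC E := ⟨insert e A.val, Finset.insert_subset he A.2⟩

def eraseEdge (e : Sym2 V) (A : RC E) : RC E := ⟨A.val.erase e, (A.val.erase_subset e).trans A.2⟩

end RC

lemma Tmat_apply {E : Finset (Sym2 V)} {q : ℕ} (p : ℝ) (e : Sym2 V) (σ τ : V → Fin q)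
    (A B : RC E) :
    Tmat E q p e (σ, A) (τ, B) =
      if σ = τ ∧ B.val.erase e = A.val.erase e then edgeWeight p σ B.val e else 0 := by
  rw [Tmat]
  erw [Matrix.of_apply]
  simp only [← IsMonochromatic.eq_1]
  by_cases hσ : σ = τ
  swap
  · simp [hσ]
  subst hσ
  by_cases heB : e ∈ B.val
  · have hne : B.val ≠ A.val.erase e := fun h => notMem_erase e _ (h ▸ heB)
    have hins : B.val = insert e A.val ↔ B.val.erase e = A.val.erase e :=
      eq_insert_iff_mem_and_erase_eq.trans (and_iff_right heB)
    by_cases hm : IsMonochromatic σ e <;> simp [edgeWeight, heB, hins, hne, hm]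
  · have hne : B.val ≠ insert e A.val := fun h => heB (h ▸ mem_insert_self e _)
    have her : B.val = A.val.erase e ↔ B.val.erase e = A.val.erase e :=
      eq_erase_iff_notMem_and_erase_eq.trans (and_iff_right heB)
    by_cases hm : IsMonochromatic σ e <;> simp [edgeWeight, heB, her, hne, hm]

lemma Tmat_mul_apply {ι : Type*} {E : Finset (Sym2 V)} {q : ℕ} (p : ℝ) {e : Sym2 V} (he : e ∈ E)
    (N : Matrix (J E q) ι ℝ) (σ : V → Fin q) (A : RC E) (i : ι) :
    (Tmat E q p e * N) (σ, A) i =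
      edgeWeight p σ (insert e A.val) e * N (σ, A.insertEdge he) i +
        edgeWeight p σ (A.val.erase e) e * N (σ, A.eraseEdge e) i := by
  erw [Matrix.mul_apply, Fintype.sum_prod_type]
  rw [sum_eq_single σ]
  · rw [Fintype.sum_eq_add (A.insertEdge he) (A.eraseEdge e)]
    · rw [Tmat_apply, Tmat_apply]
      simp only [RC.insertEdge, RC.eraseEdge, erase_insert_eq_erase, erase_idem, true_and, if_true]
    · intro h
      have := congrArg (e ∈ ·.val) h
      simp [RC.insertEdge, RC.eraseEdge] at this
    · rintro C ⟨hCi, hCe⟩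
      suffices C.val.erase e ≠ A.val.erase e by simp [Tmat_apply, this]
      intro h
      by_cases heC : e ∈ C.val
      · exact hCi (RC.ext (eq_insert_iff_mem_and_erase_eq.2 ⟨heC, h⟩))
      · exact hCe (RC.ext (eq_erase_iff_notMem_and_erase_eq.2 ⟨heC, h⟩))
  · intro σ' _ hσ'
    simp [Tmat_apply, Ne.symm hσ']
  · simp

lemma list_prod_map_Tmat_apply {E : Finset (Sym2 V)} {q : ℕ} (p : ℝ) {L : List (Sym2 V)}
    (hL : L.Nodup) (hLE : ∀ e ∈ L, e ∈ E) (σ τ : V → Fin q) (A B : RC E) :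
    (L.map (Tmat E q p)).prod (σ, A) (τ, B) =
      if τ = σ ∧ B.val \ L.toFinset = A.val \ L.toFinset
        then ∏ e ∈ L.toFinset, edgeWeight p σ B.val e else 0 := by
  induction L generalizing A with
  | nil =>
    erw [List.map_nil, List.prod_nil, Matrix.one_apply]
    simp [Prod.ext_iff, RC.ext_iff, eq_comm]
  | cons e L ih =>
    obtain ⟨heL, hL⟩ := List.nodup_cons.1 hL
    replace heL : e ∉ L.toFinset := mt List.mem_toFinset.1 heL
    have ih := ih hL fun f hf => hLE f (List.mem_cons_of_mem e hf)
    rw [List.map_cons, List.prod_cons]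
    erw [Tmat_mul_apply p (hLE e List.mem_cons_self)]
    rw [ih, ih, List.toFinset_cons, prod_insert heL]
    simp only [RC.insertEdge, RC.eraseEdge, insert_sdiff_of_notMem _ heL, erase_sdiff_comm,
      sdiff_insert]
    by_cases heB : e ∈ B.val
    · have heS : e ∈ B.val \ L.toFinset := mem_sdiff.2 ⟨heB, heL⟩
      have hne : B.val \ L.toFinset ≠ (A.val \ L.toFinset).erase e :=
        fun h => notMem_erase e _ (h ▸ heS)
      simp [edgeWeight, heB, eq_insert_iff_mem_and_erase_eq.trans (and_iff_right heS), hne]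
    · have heS : e ∉ B.val \ L.toFinset := fun h => heB (mem_sdiff.1 h).1
      have hne : B.val \ L.toFinset ≠ insert e (A.val \ L.toFinset) :=
        fun h => heS (h ▸ mem_insert_self e _)
      simp [edgeWeight, heB, eq_erase_iff_notMem_and_erase_eq.trans (and_iff_right heS), hne]

lemma prod_edgeWeight (p : ℝ) {q : ℕ} (σ : V → Fin q) {S B : Finset (Sym2 V)} (hB : B ⊆ S) :
    ∏ e ∈ S, edgeWeight p σ B e =
      if ∀ e ∈ B, IsMonochromatic σ e
        then p ^ #B * (1 - p) ^ (#(S.filter (IsMonochromatic σ)) - #B) else 0 := by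
  split_ifs with hmono
  · have hBF : B ⊆ S.filter (IsMonochromatic σ) := fun e he => mem_filter.2 ⟨hB he, hmono e he⟩
    have hnonmono : ∀ e ∈ S \ S.filter (IsMonochromatic σ), edgeWeight p σ B e = 1 := by
      intro e he
      obtain ⟨heS, heF⟩ := mem_sdiff.1 he
      have hm : ¬IsMonochromatic σ e := fun hm => heF (mem_filter.2 ⟨heS, hm⟩)
      have heB : e ∉ B := fun heB => hm (hmono e heB)
      simp [edgeWeight, hm, heB]
    have hclosed : ∀ e ∈ S.filter (IsMonochromatic σ) \ B, edgeWeight p σ B e = 1 - p := by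
      intro e he
      simp [edgeWeight, (mem_sdiff.1 he).2, (mem_filter.1 (mem_sdiff.1 he).1).2]
    have hopen : ∀ e ∈ B, edgeWeight p σ B e = p := fun e he => by
      simp [edgeWeight, he, hmono e he]
    rw [← prod_sdiff (filter_subset (IsMonochromatic σ) S), ← prod_sdiff hBF,
      prod_congr rfl hnonmono, prod_congr rfl hclosed, prod_congr rfl hopen, prod_const_one,
      prod_const, prod_const, card_sdiff_of_subset hBF]
    ring
  · push Not at hmono
    obtain ⟨e, heB, hm⟩ := hmono
    exact prod_eq_zero (hB heB) (by simp [edgeWeight, heB, hm])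

lemma list_prod_map_Tmat_toList_apply (p : ℝ) {q : ℕ} (E : Finset (Sym2 V))
    (σ τ : V → Fin q) (A B : RC E) :
    (E.toList.map (Tmat E q p)).prod (σ, A) (τ, B) =
      if τ = σ ∧ ∀ e ∈ B.val, IsMonochromatic σ e
        then p ^ #B.val * (1 - p) ^ (#(E.filter (IsMonochromatic σ)) - #B.val) else 0 := by
  rw [list_prod_map_Tmat_apply p E.nodup_toList (fun e => mem_toList.1), toList_toFinset,
    sdiff_eq_empty_iff_subset.2 A.2, sdiff_eq_empty_iff_subset.2 B.2, prod_edgeWeight p σ B.2]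
  simp only [and_true, ite_and]

lemma mul_MmatStar_apply {ι : Type*} {E : Finset (Sym2 V)} {q : ℕ} (N : Matrix ι (J E q) ℝ)
    (i : ι) (B : RC E) :
    (N * MmatStar E q) i B = ∑ τ : V → Fin q, N i (τ, B) := by
  have hM (τ : V → Fin q) (C : RC E) : MmatStar E q (τ, C) B = if C = B then 1 else 0 := rfl
  erw [Matrix.mul_apply, Fintype.sum_prod_type]
  simp [hM]

lemma Mmat_mul_apply {ι : Type*} {E : Finset (Sym2 V)} {q : ℕ} (N : Matrix (J E q) ι ℝ)
    (A : RC E) (i : ι) :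
    (Mmat E q * N) A i =
      ((q : ℝ) ^ numComp A.val)⁻¹ *
        ∑ σ : V → Fin q, if ∀ e ∈ A.val, IsMonochromatic σ e then N (σ, A) i else 0 := by
  have hM (σ : V → Fin q) (C : RC E) : Mmat E q A (σ, C) =
      if C = A ∧ ∀ e ∈ A.val, IsMonochromatic σ e then ((q : ℝ) ^ numComp A.val)⁻¹ else 0 := by
    simp only [← forall_sym2_mem_iff_forall_isMonochromatic]
    rfl
  erw [Matrix.mul_apply, Fintype.sum_prod_type]
  simp [hM, ite_and, mul_sum]

lemma pow_mul_one_sub_pow_sub {K : Type*} [Field K] {p : K} (hp : p ≠ 1) {b n : ℕ} (hbn : b ≤ n) :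
    p ^ b * (1 - p) ^ (n - b) = (p / (1 - p)) ^ b * (1 - p) ^ n := by
  have hp' : 1 - p ≠ 0 := sub_ne_zero.2 hp.symm
  rw [div_pow, pow_sub₀ _ hp' hbn]
  field_simp

theorem swendsenWang_factorization_general
    (q : ℕ) (p : ℝ) (hp : p ∈ Set.Ioo (0 : ℝ) 1)
    (E : Finset (Sym2 V)) :
    Mmat E q * (E.toList.map (Tmat E q p)).prod * MmatStar E q
      = Matrix.of (fun A B : RC E =>
          ((q : ℝ) ^ numComp A.val)⁻¹ * (p / (1 - p)) ^ B.val.card *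
            ∑ σ : V → Fin q,
              (1 - p) ^ (E.filter fun e => ∀ u v : V, e = s(u, v) → σ u = σ v).card *
                (if ∀ u v : V, s(u, v) ∈ A.val ∪ B.val → σ u = σ v
                  then (1 : ℝ) else 0)) := by
  ext A B
  rw [mul_MmatStar_apply]
  simp only [fun τ => Mmat_mul_apply (E.toList.map (Tmat E q p)).prod A (τ, B),
    list_prod_map_Tmat_toList_apply, ite_and]
  rw [← mul_sum, sum_comm, Matrix.of_apply, mul_assoc, mul_sum _ _ ((p / (1 - p)) ^ #B.val)]
  congr 1
  refine sum_congr rfl fun σ _ => ?_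
  rw [Fintype.sum_eq_single σ fun τ (hτ : τ ≠ σ) => by simp [hτ]]
  have hcard : #(E.filter fun e => ∀ u v : V, e = s(u, v) → σ u = σ v) =
      #(E.filter (IsMonochromatic σ)) :=
    congrArg card (filter_congr fun _ _ => Iff.rfl)
  simp only [hcard, forall_sym2_mem_iff_forall_isMonochromatic, forall_mem_union, if_true]
  by_cases hA : ∀ e ∈ A.val, IsMonochromatic σ e
  · by_cases hB : ∀ e ∈ B.val, IsMonochromatic σ e
    · have hBE : #B.val ≤ #(E.filter (IsMonochromatic σ)) :=
        card_le_card fun e he => mem_filter.2 ⟨B.2 he, hB e he⟩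
      rw [if_pos hA, if_pos hB, if_pos ⟨hA, hB⟩, pow_mul_one_sub_pow_sub hp.2.ne hBE, mul_one]
    · rw [if_pos hA, if_neg hB, if_neg (hB ·.2), mul_zero, mul_zero]
  · rw [if_neg hA, if_neg (hA ·.1), mul_zero, mul_zero]

/-- The Swendsen-Wang transition matrix on the random-cluster model
factorizes as `P_SW = M (∏_{e∈E} T_e) M*`, where
`P_SW(A,B) = q^{-c(A)} (p/(1−p))^{|B|} ∑_{σ} (1−p)^{|E(σ)|} 𝟙(σ ∈ Ω(A∪B))`. -/
theorem swendsenWang_factorization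
    (q : ℕ) (hq : 1 ≤ q) (p : ℝ) (hp : p ∈ Set.Ioo (0 : ℝ) 1)
    (E : Finset (Sym2 V)) (hE : ∀ e ∈ E, ¬ e.IsDiag) :
    Mmat E q * (E.toList.map (Tmat E q p)).prod * MmatStar E q
      = Matrix.of (fun A B : RC E =>
          ((q : ℝ) ^ numComp A.val)⁻¹ * (p / (1 - p)) ^ B.val.card *
            ∑ σ : V → Fin q,
              (1 - p) ^ (E.filter fun e => ∀ u v : V, e = s(u, v) → σ u = σ v).card *
                (if ∀ u v : V, s(u, v) ∈ A.val ∪ B.val → σ u = σ v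
                  then (1 : ℝ) else 0)) :=
  swendsenWang_factorization_general q p hp E

end
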